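/- Let F be a commutative perfect semi-field of characteristic 1, let r₁ and r₂ be two congruences on F, and let φ be a character of F. Suppose that φ(X) = φ(Y) whenever both X r₁ Y and X r₂ Y hold (i.e. φ factors through the congruence r₁ ∧ r₂). Then either φ(X) = φ(Y) whenever X r₁ Y, or φ(X) = φ(Y) whenever X r₂ Y. Consequently, with V(r) denoting the set of normalized characters factoring through the congruence r, one has V(r₁ ∧ r₂) = V(r₁) ∪ V(r₂). -/

import Mathlib

open scoped Pointwise

/-- A commutative perfect semi-field of characteristic `1`: an abelian group `(F, +, 0)`
together with a commutative, associative, idempotent operation `⊕` over which `+`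
distributes, and such that `X ↦ n • X` is surjective for every `n > 0`. -/
class CharOneSemifield (F : Type*) extends AddCommGroup F where
  oplus : F → F → F
  oplus_comm : ∀ X Y : F, oplus X Y = oplus Y X
  oplus_assoc : ∀ X Y Z : F, oplus (oplus X Y) Z = oplus X (oplus Y Z)
  oplus_idem : ∀ X : F, oplus X X = X
  add_oplus : ∀ X Y Z : F, X + oplus Y Z = oplus (X + Y) (X + Z)
  perfect : ∀ n : ℕ, 0 < n → Function.Surjective (fun X : F => n • X)

namespace CharOneSemifield

variable {F : Type*} [CharOneSemifield F]

/-- The canonical partial order on `F`: `X ≤ Y` iff `X ⊕ Y = Y`. -/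
def cle (X Y : F) : Prop := oplus X Y = Y

/-- Assumption 1: every element is dominated by (rational multiples of) `E`:
for every `X` there are naturals `a, b` with `b > 0` and `-(a • E) ≤ b • X ≤ a • E`. -/
def Assumption1 (E : F) : Prop :=
  ∀ X : F, ∃ a b : ℕ, 0 < b ∧ cle (-(a • E)) (b • X) ∧ cle (b • X) (a • E)

/-- `rval E X` is the infimum in `ℝ` of the ratios `a / b` over the pairs of naturals
`(a, b)` with `b > 0` and `-(a • E) ≤ b • X ≤ a • E`. -/
noncomputable def rval (E X : F) : ℝ :=
  sInf {t : ℝ | ∃ a b : ℕ, 0 < b ∧ t = (a : ℝ) / (b : ℝ) ∧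
    cle (-(a • E)) (b • X) ∧ cle (b • X) (a • E)}

/-- Assumption 2: `r(X) = 0` implies `X = 0`. -/
def Assumption2 (E : F) : Prop := ∀ X : F, rval E X = 0 → X = 0

/-- `F` is Banach if it is (sequentially) complete for the metric `(X, Y) ↦ r (X - Y)`. -/
def IsBanach (E : F) : Prop :=
  ∀ u : ℕ → F,
    (∀ ε : ℝ, 0 < ε → ∃ N : ℕ, ∀ m ≥ N, ∀ n ≥ N, rval E (u m - u n) < ε) →
    ∃ L : F, ∀ ε : ℝ, 0 < ε → ∃ N : ℕ, ∀ n ≥ N, rval E (u n - L) < ε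

/-- A character of `F`: a map `φ : F → ℝ`, not identically zero, turning `⊕` into `max`
and `+` into `+`. -/
def IsChar (φ : F → ℝ) : Prop :=
  (∃ X : F, φ X ≠ 0) ∧
  (∀ X Y : F, φ (oplus X Y) = max (φ X) (φ Y)) ∧
  (∀ X Y : F, φ (X + Y) = φ X + φ Y)

/-- The spectrum `S_E(F)`: the set of characters normalized by `φ E = 1`, viewed as a
subset of the product space `F → ℝ` (topology of pointwise convergence). -/
def specE (E : F) : Set (F → ℝ) := {φ : F → ℝ | IsChar φ ∧ φ E = 1}

/-- A congruence on `F`: an equivalence relation compatible with `-`, `+` and `⊕`. -/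
structure IsCongruence (r : F → F → Prop) : Prop where
  equiv : Equivalence r
  neg_compat : ∀ {X Y : F}, r X Y → r (-X) (-Y)
  add_compat : ∀ {X Y : F} (Z : F), r X Y → r (X + Z) (Y + Z)
  oplus_compat : ∀ {X Y : F} (Z : F), r X Y → r (oplus X Z) (oplus Y Z)

/-- A maximal congruence: a non-trivial congruence such that every coarser congruence is
either equal to it or trivial. -/
def IsMaximalCongruence (rel : F → F → Prop) : Prop :=
  IsCongruence rel ∧ (¬ ∀ X Y : F, rel X Y) ∧
  ∀ s : F → F → Prop, IsCongruence s → (∀ X Y : F, rel X Y → s X Y) →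
    (∀ X Y : F, s X Y ↔ rel X Y) ∨ (∀ X Y : F, s X Y)

end CharOneSemifield

open CharOneSemifield

/-
If `φ` factored through neither congruence, we could find `U ≥ 0` with `U r₁ 0`, `φ U > 0` and
`V ≥ 0` with `V r₂ 0`, `φ V > 0`. The element `U + V - (U ⊕ V)`, a tropical `min U V`, is then
related to `0 + V - (0 ⊕ V) = 0` by `r₁` and to `U + 0 - (U ⊕ 0) = 0` by `r₂`, so `φ` vanishes
on it; but its value is `φ U + φ V - max (φ U) (φ V) > 0`.
-/

namespace CharOneSemifield

variable {F : Type*} [CharOneSemifield F]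

namespace IsCongruence

variable {r : F → F → Prop} (hr : IsCongruence r) {X X' Y Y' : F}
include hr

theorem add (hX : r X X') (hY : r Y Y') : r (X + Y) (X' + Y') :=
  hr.equiv.trans (hr.add_compat Y hX) (by simpa only [add_comm X'] using hr.add_compat X' hY)

theorem oplus (hX : r X X') (hY : r Y Y') : r (oplus X Y) (oplus X' Y') :=
  hr.equiv.trans (hr.oplus_compat Y hX)
    (by simpa only [oplus_comm X'] using hr.oplus_compat X' hY)

theorem sub (hX : r X X') (hY : r Y Y') : r (X - Y) (X' - Y') := by
  simpa only [sub_eq_add_neg] using hr.add hX (hr.neg_compat hY)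

theorem sub_rel_zero (h : r X Y) : r (X - Y) 0 := by
  simpa only [sub_self] using hr.sub h (hr.equiv.refl Y)

theorem oplus_zero_rel_zero (h : r X 0) : r (CharOneSemifield.oplus X 0) 0 := by
  simpa only [oplus_idem] using hr.oplus h (hr.equiv.refl 0)

theorem add_sub_oplus_rel_zero {U V : F} (hU : r U 0) (hV : cle 0 V) :
    r (U + V - CharOneSemifield.oplus U V) 0 := by
  rw [cle] at hV
  simpa only [zero_add, hV, sub_self] using
    hr.sub (hr.add hU (hr.equiv.refl V)) (hr.oplus hU (hr.equiv.refl V))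

end IsCongruence

theorem cle_zero_oplus_zero (X : F) : cle 0 (oplus X 0) := by
  rw [cle, oplus_comm, oplus_assoc, oplus_idem]

section Character

variable {φ : F → ℝ} (hadd : ∀ X Y : F, φ (X + Y) = φ X + φ Y)
  (hmax : ∀ X Y : F, φ (oplus X Y) = max (φ X) (φ Y))
include hadd

theorem exists_rel_zero_pos_of_ne {r : F → F → Prop} (hr : IsCongruence r) {X Y : F}
    (hXY : r X Y) (hne : φ X ≠ φ Y) : ∃ Z, r Z 0 ∧ 0 < φ Z := by
  have hsub : ∀ X Y : F, φ (X - Y) = φ X - φ Y := (AddMonoidHom.mk' φ hadd).map_sub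
  rcases hne.lt_or_gt with hlt | hlt
  · exact ⟨Y - X, hr.sub_rel_zero (hr.equiv.symm hXY), by rw [hsub]; linarith⟩
  · exact ⟨X - Y, hr.sub_rel_zero hXY, by rw [hsub]; linarith⟩

include hmax

theorem exists_nonneg_rel_zero_pos_of_ne {r : F → F → Prop} (hr : IsCongruence r) {X Y : F}
    (hXY : r X Y) (hne : φ X ≠ φ Y) : ∃ U, r U 0 ∧ cle 0 U ∧ 0 < φ U := by
  obtain ⟨Z, hZ, hφZ⟩ := exists_rel_zero_pos_of_ne hadd hr hXY hne
  refine ⟨oplus Z 0, hr.oplus_zero_rel_zero hZ, cle_zero_oplus_zero Z, ?_⟩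
  rw [hmax, show φ 0 = 0 from (AddMonoidHom.mk' φ hadd).map_zero]
  exact lt_max_of_lt_left hφZ

theorem factors_left_or_right_of_factors_inf {r₁ r₂ : F → F → Prop} (h₁ : IsCongruence r₁)
    (h₂ : IsCongruence r₂) (hfac : ∀ X Y : F, r₁ X Y → r₂ X Y → φ X = φ Y) :
    (∀ X Y : F, r₁ X Y → φ X = φ Y) ∨ (∀ X Y : F, r₂ X Y → φ X = φ Y) := by
  by_contra! ⟨⟨X₁, Y₁, hr₁, hne₁⟩, ⟨X₂, Y₂, hr₂, hne₂⟩⟩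
  obtain ⟨U, hU, hU₀, hφU⟩ := exists_nonneg_rel_zero_pos_of_ne hadd hmax h₁ hr₁ hne₁
  obtain ⟨V, hV, hV₀, hφV⟩ := exists_nonneg_rel_zero_pos_of_ne hadd hmax h₂ hr₂ hne₂
  have hT₁ : r₁ (U + V - oplus U V) 0 := h₁.add_sub_oplus_rel_zero hU hV₀
  have hT₂ : r₂ (U + V - oplus U V) 0 := by
    simpa only [add_comm V, oplus_comm V] using h₂.add_sub_oplus_rel_zero hV hU₀
  let ψ : F →+ ℝ := AddMonoidHom.mk' φ hadd
  have hT : ψ (U + V - oplus U V) = ψ 0 := hfac _ _ hT₁ hT₂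
  simp only [map_sub, map_add, map_zero, ψ, AddMonoidHom.mk'_apply, hmax] at hT
  have : max (φ U) (φ V) < φ U + φ V := max_lt (by linarith) (by linarith)
  linarith

end Character

end CharOneSemifield

/-- if a character factors through `r₁ ∧ r₂` then it factors through `r₁`
or through `r₂`; consequently `V(r₁ ∧ r₂) = V(r₁) ∪ V(r₂)` for the sets of normalized
characters factoring through the congruences. -/
theorem stmt19 {F : Type*} [CharOneSemifield F] (E : F)
    (r₁ r₂ : F → F → Prop) (h₁ : IsCongruence r₁) (h₂ : IsCongruence r₂)
    (φ : F → ℝ) (hφ : IsChar φ)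
    (hfac : ∀ X Y : F, r₁ X Y → r₂ X Y → φ X = φ Y) :
    ((∀ X Y : F, r₁ X Y → φ X = φ Y) ∨ (∀ X Y : F, r₂ X Y → φ X = φ Y)) ∧
    ({ψ : F → ℝ | IsChar ψ ∧ ψ E = 1 ∧ ∀ X Y : F, r₁ X Y ∧ r₂ X Y → ψ X = ψ Y} =
      {ψ : F → ℝ | IsChar ψ ∧ ψ E = 1 ∧ ∀ X Y : F, r₁ X Y → ψ X = ψ Y} ∪
      {ψ : F → ℝ | IsChar ψ ∧ ψ E = 1 ∧ ∀ X Y : F, r₂ X Y → ψ X = ψ Y}) := by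
  refine ⟨factors_left_or_right_of_factors_inf hφ.2.2 hφ.2.1 h₁ h₂ hfac, ?_⟩
  ext ψ
  constructor
  · rintro ⟨hψ, hE, hinf⟩
    exact (factors_left_or_right_of_factors_inf hψ.2.2 hψ.2.1 h₁ h₂
      fun X Y h₁ h₂ => hinf X Y ⟨h₁, h₂⟩).imp (⟨hψ, hE, ·⟩) (⟨hψ, hE, ·⟩)
  · rintro (⟨hψ, hE, h⟩ | ⟨hψ, hE, h⟩)
    · exact ⟨hψ, hE, fun X Y hXY => h X Y hXY.1⟩
    · exact ⟨hψ, hE, fun X Y hXY => h X Y hXY.2⟩
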